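/- arXiv:1304.7824 — 9 statements merged into one kernel-verified Lean document; each statement's English description precedes it below -/
import Mathlib

section
/- Let A = {a_0 < a_1 < ... < a_{k-1}} ⊆ C_n. The set DN¹_0 consisting of the constant map ā_0 together with all monotone maps α with im(α) ⊆ A taking the value a_0 exactly n−1 times is a subsemiring of σ^{(n)}(A) (closed under pointwise max and composition). -/
/-!
Since `a0` is the least element of `A` and the maps are monotone, the points where a map of
`DN¹_0` differs from `a0` form an upper set with at most one element. So `DN¹_0` consists exactly
of the monotone maps into `A` sending every non-maximal point to `a0`. This description is
preserved by pointwise maximum, and by composition because every such `β` fixes `a0`: either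
`a0` lies below some point, or `a0` is the top and `a0 ≤ β a0 ≤ a0`.
-/

/-- The discrete neighborhood `DN¹` of a vertex `a`: the constant map `ā` together with all
monotone maps with range in `A` taking the value `a` exactly `n-1` times. -/
def DN1 (n : ℕ) (A : Set (Fin n)) (a : Fin n) : Set (Fin n → Fin n) :=
  {γ | Monotone γ ∧ Set.range γ ⊆ A ∧
    ((∀ i, γ i = a) ∨ (Finset.univ.filter fun i => γ i = a).card = n - 1)}

theorem Finset.eq_univ_or_card_eq_card_sub_one_iff {ι : Type*} [Fintype ι] [DecidableEq ι]
    (s : Finset ι) :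
    s = Finset.univ ∨ s.card = Fintype.card ι - 1 ↔ sᶜ.card ≤ 1 := by
  have hs : s.card ≤ Fintype.card ι := Finset.card_le_univ s
  rw [Finset.card_compl, ← Finset.card_eq_iff_eq_univ]
  omega

theorem Monotone.subsingleton_setOf_ne_iff {ι α : Type*} [LinearOrder ι] [PartialOrder α]
    {γ : ι → α} (hγ : Monotone γ) {a : α} (ha : ∀ i, a ≤ γ i) :
    {i | γ i ≠ a}.Subsingleton ↔ ∀ i j, i < j → γ i = a := by
  constructor
  · intro h i j hij
    by_contra hi
    have hj : γ j ≠ a := fun hj => hi (le_antisymm (hj ▸ hγ hij.le) (ha i))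
    exact hij.ne (h hi hj)
  · intro h i hi j hj
    by_contra hne
    rcases lt_or_gt_of_ne hne with hij | hji
    · exact hi (h i j hij)
    · exact hj (h j i hji)

theorem apply_eq_of_forall_lt_apply_eq {α : Type*} [LinearOrder α] {β : α → α} {a : α}
    (hβ : ∀ i j, i < j → β i = a) (ha : a ≤ β a) : β a = a := by
  by_cases htop : ∃ j, a < j
  · obtain ⟨j, hj⟩ := htop
    exact hβ a j hj
  · push Not at htop
    exact le_antisymm (htop (β a)) ha

section

variable {n : ℕ} {A : Set (Fin n)} {a0 : Fin n}

theorem mem_DN1_iff (hleast : ∀ x ∈ A, a0 ≤ x) {γ : Fin n → Fin n} :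
    γ ∈ DN1 n A a0 ↔ Monotone γ ∧ Set.range γ ⊆ A ∧ ∀ i j, i < j → γ i = a0 := by
  refine and_congr_right fun hγ => and_congr_right fun hA => ?_
  have hcount := Finset.eq_univ_or_card_eq_card_sub_one_iff (Finset.univ.filter (γ · = a0))
  rw [Fintype.card_fin] at hcount
  rw [← hγ.subsingleton_setOf_ne_iff fun i => hleast _ (hA ⟨i, rfl⟩)]
  simpa [Set.Subsingleton, Finset.card_le_one] using hcount

theorem max_mem_DN1 (hleast : ∀ x ∈ A, a0 ≤ x) {α β : Fin n → Fin n}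
    (hα : α ∈ DN1 n A a0) (hβ : β ∈ DN1 n A a0) : (fun i => max (α i) (β i)) ∈ DN1 n A a0 := by
  rw [mem_DN1_iff hleast] at hα hβ ⊢
  obtain ⟨hαm, hαA, hα0⟩ := hα
  obtain ⟨hβm, hβA, hβ0⟩ := hβ
  refine ⟨hαm.sup hβm, ?_, fun i j hij => by simp [hα0 i j hij, hβ0 i j hij]⟩
  rintro _ ⟨i, rfl⟩
  rcases max_choice (α i) (β i) with h | h <;> simp only [h]
  exacts [hαA ⟨i, rfl⟩, hβA ⟨i, rfl⟩]

theorem comp_mem_DN1 (hleast : ∀ x ∈ A, a0 ≤ x) {α β : Fin n → Fin n}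
    (hα : α ∈ DN1 n A a0) (hβ : β ∈ DN1 n A a0) : β ∘ α ∈ DN1 n A a0 := by
  rw [mem_DN1_iff hleast] at hα hβ ⊢
  obtain ⟨hαm, -, hα0⟩ := hα
  obtain ⟨hβm, hβA, hβ0⟩ := hβ
  have hβa0 : β a0 = a0 := apply_eq_of_forall_lt_apply_eq hβ0 (hleast _ (hβA ⟨a0, rfl⟩))
  refine ⟨hβm.comp hαm, (Set.range_comp_subset_range α β).trans hβA, fun i j hij => ?_⟩
  rw [Function.comp_apply, hα0 i j hij, hβa0]

end

theorem stmt3_general (n : ℕ) (A : Set (Fin n)) (a0 : Fin n)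
    (hleast : ∀ x ∈ A, a0 ≤ x) :
    ∀ α ∈ DN1 n A a0, ∀ β ∈ DN1 n A a0,
      (fun i => max (α i) (β i)) ∈ DN1 n A a0 ∧ (β ∘ α) ∈ DN1 n A a0 :=
  fun _ hα _ hβ => ⟨max_mem_DN1 hleast hα hβ, comp_mem_DN1 hleast hα hβ⟩

/-- For `a0` the least element of `A`, the set `DN¹_0` is closed under pointwise
maximum and under composition, i.e. it is a subsemiring of the simplex `σ^{(n)}(A)`. -/
theorem stmt3 (n : ℕ) (A : Set (Fin n)) (a0 : Fin n) (ha0 : a0 ∈ A)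
    (hleast : ∀ x ∈ A, a0 ≤ x) :
    ∀ α ∈ DN1 n A a0, ∀ β ∈ DN1 n A a0,
      (fun i => max (α i) (β i)) ∈ DN1 n A a0 ∧ (β ∘ α) ∈ DN1 n A a0 :=
  stmt3_general n A a0 hleast
end

section
/- If 0 < a_0 and a_{k-1} < n−1 (internal simplex), then for any vertex index m, the semiring DN¹_m is commutative and every element α of DN¹_m satisfies α² = ā_m (the constant map with value a_m); in particular every element is a_m-nilpotent. -/
open Finset

theorem Finset.forall_ne_of_card_filter_eq_card_sub_one {ι : Type*} [Fintype ι] [DecidableEq ι]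
    {p : ι → Prop} [DecidablePred p] (hcard : #(univ.filter p) = Fintype.card ι - 1)
    {x : ι} (hx : ¬ p x) : ∀ i ≠ x, p i := by
  have hsub : univ.filter p ⊆ univ.erase x := fun i hi => by
    rw [mem_filter] at hi
    exact mem_erase.mpr ⟨fun h => hx (h ▸ hi.2), mem_univ i⟩
  have heq : univ.filter p = univ.erase x :=
    eq_of_subset_of_card_le hsub (by rw [card_erase_of_mem (mem_univ x), card_univ, hcard])
  intro i hi
  have : i ∈ univ.filter p := heq ▸ mem_erase.mpr ⟨hi, mem_univ i⟩
  exact (mem_filter.mp this).2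

theorem Monotone.apply_eq_of_mem_Icc {α β : Type*} [Preorder α] [PartialOrder β] {f : α → β}
    (hf : Monotone f) {x y z : α} (hx : x ∈ Set.Icc y z) {c : β} (hy : f y = c) (hz : f z = c) :
    f x = c :=
  le_antisymm (hz ▸ hf hx.2) (hy ▸ hf hx.1)

namespace DN1

variable {n : ℕ} {A : Set (Fin n)} {a : Fin n}

theorem apply_eq_of_interior {β : Fin n → Fin n} (hβ : β ∈ DN1 n A a) {x : Fin n}
    (hx0 : 0 < (x : ℕ)) (hxn : (x : ℕ) < n - 1) : β x = a := by
  obtain ⟨hmono, -, hconst | hcard⟩ := hβ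
  · exact hconst x
  by_contra hne
  have hrest : ∀ i ≠ x, β i = a :=
    forall_ne_of_card_filter_eq_card_sub_one (by rwa [Fintype.card_fin]) hne
  let y : Fin n := ⟨x - 1, by omega⟩
  let z : Fin n := ⟨x + 1, by omega⟩
  have hyx : y ≠ x := Fin.ne_of_val_ne (show (x : ℕ) - 1 ≠ x by omega)
  have hzx : z ≠ x := Fin.ne_of_val_ne (show (x : ℕ) + 1 ≠ x by omega)
  have hx : x ∈ Set.Icc y z :=
    ⟨Fin.le_def.mpr (show (x : ℕ) - 1 ≤ x by omega),
      Fin.le_def.mpr (show (x : ℕ) ≤ x + 1 by omega)⟩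
  exact hne (hmono.apply_eq_of_mem_Icc hx (hrest y hyx) (hrest z hzx))

theorem comp_eq_const (hA : ∀ x ∈ A, 0 < (x : ℕ) ∧ (x : ℕ) < n - 1)
    {α β : Fin n → Fin n} (hα : α ∈ DN1 n A a) (hβ : β ∈ DN1 n A a) :
    β ∘ α = fun _ => a := by
  funext i
  obtain ⟨h0, hn⟩ := hA (α i) (hα.2.1 ⟨i, rfl⟩)
  exact apply_eq_of_interior hβ h0 hn

end DN1

theorem stmt4_general (n : ℕ) (A : Set (Fin n)) (am : Fin n)
    (hA : ∀ x ∈ A, 0 < (x : ℕ) ∧ (x : ℕ) < n - 1) :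
    ∀ α ∈ DN1 n A am, ∀ β ∈ DN1 n A am,
      β ∘ α = α ∘ β ∧ β ∘ α = (fun _ => am) ∧ α ∘ α = (fun _ => am) := by
  intro α hα β hβ
  have hβα := DN1.comp_eq_const hA hα hβ
  exact ⟨hβα.trans (DN1.comp_eq_const hA hβ hα).symm, hβα, DN1.comp_eq_const hA hα hα⟩

/-- For an internal simplex (`0 < x` and `x < n-1` for all `x ∈ A`), the semiring
`DN¹_m` is commutative and the product of any two of its elements is the constant map `ā_m`;
in particular every element squares to `ā_m`, hence is `a_m`-nilpotent. -/
theorem stmt4 (n : ℕ) (A : Set (Fin n)) (am : Fin n) (ham : am ∈ A)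
    (hA : ∀ x ∈ A, 0 < (x : ℕ) ∧ (x : ℕ) < n - 1) :
    ∀ α ∈ DN1 n A am, ∀ β ∈ DN1 n A am,
      β ∘ α = α ∘ β ∧ β ∘ α = (fun _ => am) ∧ α ∘ α = (fun _ => am) :=
  stmt4_general n A am hA
end

section
/- Let A = {a_0 < ... < a_{k-1}} ⊆ C_n with least element a_0. The union of the constant map ā_0 with all layers L^ℓ_{a_0}(σ^{(n)}(A)) for ℓ ≥ a_0+1 equals exactly the set of α ∈ σ^{(n)}(A) with α(a_0) = a_0. Equivalently, α ∈ σ^{(n)}(A) takes the value a_0 at least a_0+1 times if and only if a_0 is a fixed point of α. -/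
/-!
Since `a0` lies below every value of `α`, monotonicity makes the fibre `α ⁻¹' {a0}` a lower set of
`Fin n`, i.e. an initial segment. An initial segment has more than `a0` elements exactly when it
contains `a0`.
-/

theorem Monotone.isLowerSet_setOf_eq_of_forall_le {ι β : Type*} [Preorder ι] [PartialOrder β]
    {f : ι → β} (hf : Monotone f) {b : β} (hb : ∀ x, b ≤ f x) : IsLowerSet {x | f x = b} :=
  fun _ _ hyx hx => le_antisymm (hx ▸ hf hyx) (hb _)

theorem Fin.lt_card_iff_mem_of_isLowerSet {n : ℕ} {s : Finset (Fin n)}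
    (hs : IsLowerSet (s : Set (Fin n))) (a : Fin n) : (a : ℕ) < s.card ↔ a ∈ s := by
  constructor
  · intro hcard
    by_contra ha
    have hsub : s ⊆ Finset.Iio a := fun x hx =>
      Finset.mem_Iio.2 (lt_of_not_ge fun hax => ha (hs hax hx))
    have := Finset.card_le_card hsub
    rw [Fin.card_Iio] at this
    omega
  · intro ha
    have hsub : Finset.Iic a ⊆ s := fun x hx => hs (Finset.mem_Iic.1 hx) ha
    have := Finset.card_le_card hsub
    rw [Fin.card_Iic] at this
    omega

theorem stmt5_general (n : ℕ) (A : Set (Fin n)) (a0 : Fin n)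
    (hleast : ∀ x ∈ A, a0 ≤ x) (α : Fin n → Fin n) (hm : Monotone α)
    (hr : Set.range α ⊆ A) :
    (a0 : ℕ) + 1 ≤ (Finset.univ.filter fun i => α i = a0).card ↔ α a0 = a0 := by
  have hlower :
      IsLowerSet ((Finset.univ.filter fun i => α i = a0 : Finset (Fin n)) : Set (Fin n)) := by
    simpa only [Finset.coe_filter, Finset.mem_univ, true_and] using
      hm.isLowerSet_setOf_eq_of_forall_le fun x => hleast _ (hr ⟨x, rfl⟩)
  rw [Nat.add_one_le_iff, Fin.lt_card_iff_mem_of_isLowerSet hlower]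
  simp

/-- For `a0` the least element of `A` and `α` a monotone map with range in `A`,
`α` takes the value `a0` at least `a0 + 1` times iff `a0` is a fixed point of `α`. -/
theorem stmt5 (n : ℕ) (A : Set (Fin n)) (a0 : Fin n) (ha0 : a0 ∈ A)
    (hleast : ∀ x ∈ A, a0 ≤ x) (α : Fin n → Fin n) (hm : Monotone α)
    (hr : Set.range α ⊆ A) :
    (a0 : ℕ) + 1 ≤ (Finset.univ.filter fun i => α i = a0).card ↔ α a0 = a0 :=
  stmt5_general n A a0 hleast α hm hr
end

section
/- Let A = {a_0 < ... < a_{k-1}} ⊆ C_n. If α ∈ σ^{(n)}(A) is a_0-nilpotent (some power of α is the constant map ā_0), then α(i) < i for all i ≥ a_0 + 1; in particular α(a_1) = a_0 and α(j) = a_0 for all j ≤ a_1. -/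
/-!
If `α i ≥ i` then, `α` being monotone, the orbit `i ≤ α i ≤ α² i ≤ …` never decreases, so the
iterate `α^[m] = ā₀` gives `i ≤ a₀`. Hence `α` moves every `i > a₀` strictly down. As `α a₁ ∈ A`
and the only element of `A` below `a₁` is `a₀`, this forces `α a₁ = a₀`, and monotonicity
squeezes `α j` between `a₀ = min A` and `α a₁ = a₀` for `j ≤ a₁`.
-/

theorem Monotone.apply_lt_self_of_iterate_eq_const {X : Type*} [LinearOrder X] {f : X → X}
    (hf : Monotone f) {a : X} {m : ℕ} (hnil : f^[m] = fun _ => a) {i : X} (hi : a < i) :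
    f i < i := by
  by_contra! hle
  have horbit : i ≤ f^[m] i := hf.monotone_iterate_of_le_map hle (Nat.zero_le m)
  rw [hnil] at horbit
  exact hi.not_ge horbit

theorem stmt7_general (n : ℕ) (A : Set (Fin n)) (a0 a1 : Fin n)
    (hlt : a0 < a1) (hleast : ∀ x ∈ A, a0 ≤ x) (hsecond : ∀ x ∈ A, x = a0 ∨ a1 ≤ x)
    (α : Fin n → Fin n) (hm : Monotone α) (hr : Set.range α ⊆ A)
    (hnil : ∃ m : ℕ, 1 ≤ m ∧ α^[m] = fun _ => a0) :
    (∀ i : Fin n, a0 < i → α i < i) ∧ α a1 = a0 ∧ (∀ j : Fin n, j ≤ a1 → α j = a0) := by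
  obtain ⟨m, -, hnil⟩ := hnil
  have hdecr : ∀ i, a0 < i → α i < i := fun i hi => hm.apply_lt_self_of_iterate_eq_const hnil hi
  have ha1 : α a1 = a0 :=
    (hsecond _ (hr ⟨a1, rfl⟩)).resolve_right (hdecr a1 hlt).not_ge
  refine ⟨hdecr, ha1, fun j hj => le_antisymm ?_ (hleast _ (hr ⟨j, rfl⟩))⟩
  exact ha1 ▸ hm hj

/-- If `α ∈ σ^{(n)}(A)` is `a0`-nilpotent (some positive iterate is the constant
map `ā0`), where `a0 < a1` are the two least elements of `A`, then `α i < i` for all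
`i > a0`, `α a1 = a0`, and `α j = a0` for all `j ≤ a1`. -/
theorem stmt7 (n : ℕ) (A : Set (Fin n)) (a0 a1 : Fin n) (ha0 : a0 ∈ A) (ha1 : a1 ∈ A)
    (hlt : a0 < a1) (hleast : ∀ x ∈ A, a0 ≤ x) (hsecond : ∀ x ∈ A, x = a0 ∨ a1 ≤ x)
    (α : Fin n → Fin n) (hm : Monotone α) (hr : Set.range α ⊆ A)
    (hnil : ∃ m : ℕ, 1 ≤ m ∧ α^[m] = fun _ => a0) :
    (∀ i : Fin n, a0 < i → α i < i) ∧ α a1 = a0 ∧ (∀ j : Fin n, j ≤ a1 → α j = a0) :=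
  stmt7_general n A a0 a1 hlt hleast hsecond α hm hr hnil
end

section
/- Let A = {a_0 < ... < a_{k-1}} ⊆ C_n. The layer L^{a_0+1}_{a_0}(σ^{(n)}(A)), consisting of all α ∈ σ^{(n)}(A) taking the value a_0 exactly a_0+1 times, is closed under pointwise max and under composition; moreover for any α in this layer, every power α^m lies in this layer. -/
/-! Since `a0` is the least element of `A`, a map in `σ^{(n)}(A)` takes the value `a0` exactly on
the initial segment `{i | α i ≤ a0}`. Having `a0 + 1` elements, this segment is `[0, a0]`, so the
layer consists of the maps of `σ^{(n)}(A)` with `α i ≤ a0 ↔ i ≤ a0`. That condition is visibly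
preserved by `max` (via `max_le_iff`) and by composition, hence by iteration. -/

/-- The `s`-th layer of the simplex `σ^{(n)}(A)` with respect to a value `a`: all monotone maps
with range in `A` taking the value `a` exactly `s` times. -/
def layer (n : ℕ) (A : Set (Fin n)) (a : Fin n) (s : ℕ) : Set (Fin n → Fin n) :=
  {α | Monotone α ∧ Set.range α ⊆ A ∧ (Finset.univ.filter fun i => α i = a).card = s}

open Finset

theorem Finset.eq_of_isLowerSet_of_card_eq {ι : Type*} [LinearOrder ι] {s t : Finset ι}
    (hs : IsLowerSet (s : Set ι)) (ht : IsLowerSet (t : Set ι)) (h : #s = #t) : s = t := by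
  rcases hs.total ht with hst | hts
  · exact eq_of_subset_of_card_le (coe_subset.1 hst) h.ge
  · exact (eq_of_subset_of_card_le (coe_subset.1 hts) h.le).symm

theorem Monotone.card_filter_apply_le_eq_succ_iff {n : ℕ} {β : Type*} [Preorder β] [DecidableLE β]
    {f : Fin n → β} (hf : Monotone f) (b : β) (a : Fin n) :
    #{i | f i ≤ b} = (a : ℕ) + 1 ↔ ∀ i, f i ≤ b ↔ i ≤ a := by
  have hlower : IsLowerSet ((univ.filter (f · ≤ b) : Finset (Fin n)) : Set (Fin n)) := by
    intro i j hji hi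
    simp only [coe_filter, mem_univ, true_and] at hi ⊢
    exact (hf hji).trans hi
  rw [← Fin.card_Iic a]
  constructor
  · intro h i
    have hIic := eq_of_isLowerSet_of_card_eq hlower (by simpa using isLowerSet_Iic a) h
    simpa using Finset.ext_iff.1 hIic i
  · intro h
    congr 1
    ext i
    simp [h]

theorem iterate_mem_of_comp_mem {α : Type*} {S : Set (α → α)}
    (hS : ∀ f ∈ S, ∀ g ∈ S, g ∘ f ∈ S) {f : α → α} (hf : f ∈ S) :
    ∀ m : ℕ, 1 ≤ m → f^[m] ∈ S := by
  intro m hm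
  induction m, hm using Nat.le_induction with
  | base => exact hf
  | succ k _ ih =>
    rw [Function.iterate_succ]
    exact hS f hf _ ih

section LeastElement

variable {n : ℕ} {A : Set (Fin n)} {a0 : Fin n} (hleast : ∀ x ∈ A, a0 ≤ x)
include hleast

theorem mem_layer_succ_iff_of_least {α : Fin n → Fin n} :
    α ∈ layer n A a0 ((a0 : ℕ) + 1) ↔
      Monotone α ∧ Set.range α ⊆ A ∧ ∀ i, α i ≤ a0 ↔ i ≤ a0 := by
  refine and_congr_right fun hmono => and_congr_right fun hrange => ?_
  have hfiber : (univ.filter fun i => α i = a0) = univ.filter fun i => α i ≤ a0 :=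
    filter_congr fun i _ => ⟨le_of_eq, fun h => le_antisymm h (hleast _ (hrange ⟨i, rfl⟩))⟩
  rw [hfiber, hmono.card_filter_apply_le_eq_succ_iff]

theorem max_mem_layer_succ_of_least {α β : Fin n → Fin n}
    (hα : α ∈ layer n A a0 ((a0 : ℕ) + 1)) (hβ : β ∈ layer n A a0 ((a0 : ℕ) + 1)) :
    (fun i => max (α i) (β i)) ∈ layer n A a0 ((a0 : ℕ) + 1) := by
  obtain ⟨hαmono, hαrange, hαfiber⟩ := (mem_layer_succ_iff_of_least hleast).1 hα
  obtain ⟨hβmono, hβrange, hβfiber⟩ := (mem_layer_succ_iff_of_least hleast).1 hβ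
  refine (mem_layer_succ_iff_of_least hleast).2 ⟨hαmono.max hβmono, ?_, ?_⟩
  · rintro _ ⟨i, rfl⟩
    show max (α i) (β i) ∈ A
    rcases max_choice (α i) (β i) with h | h <;> rw [h]
    exacts [hαrange ⟨i, rfl⟩, hβrange ⟨i, rfl⟩]
  · intro i
    rw [max_le_iff, hαfiber, hβfiber, and_self]

theorem comp_mem_layer_succ_of_least {α β : Fin n → Fin n}
    (hα : α ∈ layer n A a0 ((a0 : ℕ) + 1)) (hβ : β ∈ layer n A a0 ((a0 : ℕ) + 1)) :
    β ∘ α ∈ layer n A a0 ((a0 : ℕ) + 1) := by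
  obtain ⟨hαmono, -, hαfiber⟩ := (mem_layer_succ_iff_of_least hleast).1 hα
  obtain ⟨hβmono, hβrange, hβfiber⟩ := (mem_layer_succ_iff_of_least hleast).1 hβ
  refine (mem_layer_succ_iff_of_least hleast).2 ⟨hβmono.comp hαmono, ?_, fun i => ?_⟩
  · rintro _ ⟨i, rfl⟩
    exact hβrange ⟨α i, rfl⟩
  · rw [Function.comp_apply, hβfiber, hαfiber]

end LeastElement

theorem stmt8_general (n : ℕ) (A : Set (Fin n)) (a0 : Fin n)
    (hleast : ∀ x ∈ A, a0 ≤ x) :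
    ∀ α ∈ layer n A a0 ((a0 : ℕ) + 1), ∀ β ∈ layer n A a0 ((a0 : ℕ) + 1),
      (fun i => max (α i) (β i)) ∈ layer n A a0 ((a0 : ℕ) + 1) ∧
      (β ∘ α) ∈ layer n A a0 ((a0 : ℕ) + 1) ∧
      (∀ m : ℕ, 1 ≤ m → α^[m] ∈ layer n A a0 ((a0 : ℕ) + 1)) := by
  intro α hα β hβ
  exact ⟨max_mem_layer_succ_of_least hleast hα hβ, comp_mem_layer_succ_of_least hleast hα hβ,
    iterate_mem_of_comp_mem (fun f hf g hg => comp_mem_layer_succ_of_least hleast hf hg) hα⟩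

/-- For `a0` the least element of `A`, the layer `L^{a0+1}_{a0}(σ^{(n)}(A))` is
closed under pointwise max, under composition, and under taking positive powers. -/
theorem stmt8 (n : ℕ) (A : Set (Fin n)) (a0 : Fin n) (ha0 : a0 ∈ A)
    (hleast : ∀ x ∈ A, a0 ≤ x) :
    ∀ α ∈ layer n A a0 ((a0 : ℕ) + 1), ∀ β ∈ layer n A a0 ((a0 : ℕ) + 1),
      (fun i => max (α i) (β i)) ∈ layer n A a0 ((a0 : ℕ) + 1) ∧
      (β ∘ α) ∈ layer n A a0 ((a0 : ℕ) + 1) ∧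
      (∀ m : ℕ, 1 ≤ m → α^[m] ∈ layer n A a0 ((a0 : ℕ) + 1)) :=
  stmt8_general n A a0 hleast
end

section
/- For a < b < c in C_n, the union of the two consecutive strings STR^{(n)}{a,b} and STR^{(n)}{b,c} is closed under pointwise max and under composition (it is a subsemiring of Ê_{C_n}). -/
/-!
Write `strString n u v` for `STR^{(n)}{u,v}`. For `u ≤ v` its elements are monotone step
functions, and `u_k v_{n-k} ⊔ u_l v_{n-l} = u_{min k l} v_{n - min k l}`; moreover every element
of `STR{a,b}` lies below every element of `STR{b,c}`, so a mixed max is just the larger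
argument. For composition, `β ∘ u_k v_{n-k} = (β u)_k (β v)_{n-k}`, and when `β` is a step
function from `u'` to `v'` the pair `(β u, β v)` is `(u', u')`, `(u', v')` or `(v', v')`; the
constant maps are the ends `u'_n v'_0` and `u'_0 v'_n` of `STR{u',v'}`, so `β ∘ α` stays in the
string of `β`.
-/

/-- The element `u_m v_{n-m}` of the string `STR^{(n)}{u,v}`. -/
def strMap (n : ℕ) (u v : Fin n) (m : ℕ) : Fin n → Fin n :=
  fun i => if (i : ℕ) < m then u else v

def strString (n : ℕ) (u v : Fin n) : Set (Fin n → Fin n) :=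
  {γ | ∃ k ≤ n, γ = strMap n u v k}

section Strings

variable {n : ℕ} {a b c u v u' v' : Fin n} {α β : Fin n → Fin n}

lemma strMap_mem_strString {k : ℕ} (hk : k ≤ n) : strMap n u v k ∈ strString n u v :=
  ⟨k, hk, rfl⟩

lemma comp_strMap (β : Fin n → Fin n) (u v : Fin n) (k : ℕ) :
    β ∘ strMap n u v k = strMap n (β u) (β v) k := by
  funext i
  simp only [Function.comp_apply, strMap, apply_ite β]

lemma strMap_self_eq_strMap_top (u v : Fin n) (k : ℕ) : strMap n u u k = strMap n u v n := by
  funext i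
  simp [strMap]

lemma strMap_self_eq_strMap_zero (u v : Fin n) (k : ℕ) : strMap n v v k = strMap n u v 0 := by
  funext i
  simp [strMap]

lemma left_le_strMap (huv : u ≤ v) (k : ℕ) (i : Fin n) : u ≤ strMap n u v k i := by
  unfold strMap
  split_ifs <;> simp [huv]

lemma strMap_le_right (huv : u ≤ v) (k : ℕ) (i : Fin n) : strMap n u v k i ≤ v := by
  unfold strMap
  split_ifs <;> simp [huv]

lemma strMap_sup_strMap (huv : u ≤ v) (k l : ℕ) :
    strMap n u v k ⊔ strMap n u v l = strMap n u v (min k l) := by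
  funext i
  simp only [Pi.sup_apply, strMap, lt_min_iff]
  by_cases hk : (i : ℕ) < k <;> by_cases hl : (i : ℕ) < l <;> simp [hk, hl, huv]

lemma sup_mem_strString (huv : u ≤ v) (hα : α ∈ strString n u v) (hβ : β ∈ strString n u v) :
    α ⊔ β ∈ strString n u v := by
  obtain ⟨k, hk, rfl⟩ := hα
  obtain ⟨l, -, rfl⟩ := hβ
  rw [strMap_sup_strMap huv]
  exact strMap_mem_strString ((min_le_left k l).trans hk)

lemma le_of_mem_strString (hab : a ≤ b) (hbc : b ≤ c) (hα : α ∈ strString n a b)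
    (hβ : β ∈ strString n b c) : α ≤ β := by
  obtain ⟨k, -, rfl⟩ := hα
  obtain ⟨l, -, rfl⟩ := hβ
  exact fun i => (strMap_le_right hab k i).trans (left_le_strMap hbc l i)

lemma comp_mem_strString (huv : u ≤ v) (hα : α ∈ strString n u v)
    (hβ : β ∈ strString n u' v') : β ∘ α ∈ strString n u' v' := by
  obtain ⟨k, hk, rfl⟩ := hα
  obtain ⟨l, -, rfl⟩ := hβ
  rw [comp_strMap]
  show strMap n (if (u : ℕ) < l then u' else v') (if (v : ℕ) < l then u' else v') k ∈ _
  by_cases hu : (u : ℕ) < l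
  · by_cases hv : (v : ℕ) < l
    · rw [if_pos hu, if_pos hv, strMap_self_eq_strMap_top u' v']
      exact strMap_mem_strString le_rfl
    · rw [if_pos hu, if_neg hv]
      exact strMap_mem_strString hk
  · have hv : ¬ (v : ℕ) < l := fun hv => hu ((Fin.le_iff_val_le_val.mp huv).trans_lt hv)
    rw [if_neg hu, if_neg hv, strMap_self_eq_strMap_zero u' v']
    exact strMap_mem_strString (Nat.zero_le n)

lemma sup_mem_union_strString (hab : a ≤ b) (hbc : b ≤ c)
    (hα : α ∈ strString n a b ∪ strString n b c) (hβ : β ∈ strString n a b ∪ strString n b c) :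
    α ⊔ β ∈ strString n a b ∪ strString n b c := by
  rcases hα with hα | hα <;> rcases hβ with hβ | hβ
  · exact .inl (sup_mem_strString hab hα hβ)
  · rw [sup_of_le_right (le_of_mem_strString hab hbc hα hβ)]
    exact .inr hβ
  · rw [sup_of_le_left (le_of_mem_strString hab hbc hβ hα)]
    exact .inr hα
  · exact .inr (sup_mem_strString hbc hα hβ)

lemma comp_mem_union_strString (hab : a ≤ b) (hbc : b ≤ c)
    (hα : α ∈ strString n a b ∪ strString n b c) (hβ : β ∈ strString n a b ∪ strString n b c) :
    β ∘ α ∈ strString n a b ∪ strString n b c := by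
  have hα' : ∃ u v, u ≤ v ∧ α ∈ strString n u v :=
    hα.elim (fun h => ⟨a, b, hab, h⟩) (fun h => ⟨b, c, hbc, h⟩)
  obtain ⟨u, v, huv, hα'⟩ := hα'
  exact hβ.imp (comp_mem_strString huv hα') (comp_mem_strString huv hα')

end Strings

/-- For `a < b < c`, the union of the consecutive strings `STR^{(n)}{a,b}` and
`STR^{(n)}{b,c}` is closed under pointwise max and under composition. -/
theorem stmt12 (n : ℕ) (a b c : Fin n) (hab : a < b) (hbc : b < c) :
    ∀ α ∈ {γ | ∃ k ≤ n, γ = strMap n a b k ∨ γ = strMap n b c k},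
    ∀ β ∈ {γ | ∃ k ≤ n, γ = strMap n a b k ∨ γ = strMap n b c k},
      (fun i => max (α i) (β i)) ∈ {γ | ∃ k ≤ n, γ = strMap n a b k ∨ γ = strMap n b c k} ∧
      (β ∘ α) ∈ {γ | ∃ k ≤ n, γ = strMap n a b k ∨ γ = strMap n b c k} := by
  have hunion : {γ | ∃ k ≤ n, γ = strMap n a b k ∨ γ = strMap n b c k} =
      strString n a b ∪ strString n b c := by
    ext γ
    simp only [strString, Set.mem_ofPred_eq, Set.mem_union, and_or_left, exists_or]
  rw [hunion]
  intro α hα β hβ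
  exact ⟨sup_mem_union_strString hab.le hbc.le hα hβ, comp_mem_union_strString hab.le hbc.le hα hβ⟩
end

section
/- Every element a_k b_ℓ c_{n−k−ℓ} of the triangle Δ^{(n)}{a,b,c} with ℓ ≥ 1 and n−k−ℓ ≥ 1 (interior together with interior of the b,c-string) can be uniquely written as the pointwise max of an element a_m b_{n−m} of STR^{(n)}{a,b} (0 ≤ m ≤ n−2) and an element a_{n−j} c_j of STR^{(n)}{a,c} (1 ≤ j ≤ n−1): namely a_{n−j} c_j + a_k b_{n−k} = a_k b_{n−k−j} c_j whenever k ≤ n−j−1. -/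
/-- The element `a_k b_ℓ c_{n-k-ℓ}` of the triangle `Δ^{(n)}{a,b,c}`. -/
def triMap (n : ℕ) (a b c : Fin n) (k ℓ : ℕ) : Fin n → Fin n :=
  fun i => if (i : ℕ) < k then a else if (i : ℕ) < k + ℓ then b else c

theorem Nat.eq_of_forall_lt_iff_lt {m k N : ℕ} (hk : k < N) (h : ∀ i < N, i < m ↔ i < k) :
    m = k := by
  rcases lt_trichotomy m k with hmk | rfl | hkm
  · exact absurd ((h m (hmk.trans hk)).mpr hmk) (lt_irrefl m)
  · rfl
  · exact absurd ((h k hk).mp hkm) (lt_irrefl k)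

section

variable {n : ℕ} {a b c : Fin n} {k ℓ m p : ℕ} {i : Fin n}

theorem strMap_apply_eq_left_iff {u v : Fin n} (huv : u ≠ v) :
    strMap n u v m i = u ↔ (i : ℕ) < m := by
  unfold strMap
  split_ifs with hi <;> simp [hi, huv.symm]

theorem triMap_apply_eq_right_iff (hac : a ≠ c) (hbc : b ≠ c) :
    triMap n a b c k ℓ i = c ↔ k + ℓ ≤ (i : ℕ) := by
  unfold triMap
  split_ifs <;> simp [hac, hbc] <;> omega

theorem triMap_apply_of_lt (hi : (i : ℕ) < k + ℓ) : triMap n a b c k ℓ i = strMap n a b k i := by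
  unfold triMap strMap
  split_ifs <;> rfl

theorem max_strMap_apply_eq_right_iff (hac : a < c) (hbc : b < c) :
    max (strMap n a c p i) (strMap n a b m i) = c ↔ p ≤ (i : ℕ) := by
  have hab_lt : strMap n a b m i < c := by unfold strMap; split_ifs <;> assumption
  change max (if (i : ℕ) < p then a else c) (strMap n a b m i) = c ↔ _
  split_ifs with hp
  · simp [(max_lt hac hab_lt).ne, hp]
  · simp [hab_lt.le, not_lt.mp hp]

theorem max_strMap_apply_of_lt (hab : a ≤ b) (hi : (i : ℕ) < p) :
    max (strMap n a c p i) (strMap n a b m i) = strMap n a b m i := by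
  unfold strMap
  split_ifs <;> simp [hab]

theorem max_strMap_eq_triMap (hab : a ≤ b) (hbc : b ≤ c) :
    (fun i => max (strMap n a c (k + ℓ) i) (strMap n a b k i)) = triMap n a b c k ℓ := by
  funext i
  by_cases hi : (i : ℕ) < k + ℓ
  · rw [max_strMap_apply_of_lt hab hi, triMap_apply_of_lt hi]
  · have hstr : strMap n a b k i ≤ c := by unfold strMap; split_ifs <;> order
    have hi_k : ¬(i : ℕ) < k := fun h => hi (by omega)
    change max (if (i : ℕ) < k + ℓ then a else c) _ = if (i : ℕ) < k then a else
      if (i : ℕ) < k + ℓ then b else c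
    rw [if_neg hi, if_neg hi_k, if_neg hi, max_eq_left hstr]

theorem eq_of_max_strMap_eq_triMap (hab : a < b) (hbc : b < c) (hℓ : 0 < ℓ) (hn : k + ℓ < n)
    (h : (fun i => max (strMap n a c p i) (strMap n a b m i)) = triMap n a b c k ℓ) :
    p = k + ℓ ∧ m = k := by
  have hp : p = k + ℓ := Nat.eq_of_forall_lt_iff_lt hn fun i hi => by
    have hc := max_strMap_apply_eq_right_iff (i := ⟨i, hi⟩) (p := p) (m := m)
      (hab.trans hbc) hbc
    rw [congrFun h, triMap_apply_eq_right_iff (hab.trans hbc).ne hbc.ne] at hc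
    simpa only [not_le] using (not_congr hc).symm
  subst hp
  refine ⟨rfl, Nat.eq_of_forall_lt_iff_lt (by omega : k < k + ℓ) fun i hi => ?_⟩
  have hstr := congrFun h ⟨i, by omega⟩
  rw [max_strMap_apply_of_lt hab.le hi, triMap_apply_of_lt hi] at hstr
  have hm := strMap_apply_eq_left_iff (i := ⟨i, by omega⟩) (m := m) hab.ne
  rw [hstr, strMap_apply_eq_left_iff hab.ne] at hm
  exact hm.symm

end

/-- Every element `a_k b_ℓ c_j` of `Δ^{(n)}{a,b,c}` with `ℓ ≥ 1` and `j ≥ 1` is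
the pointwise max `a_{n-j} c_j + a_k b_{n-k}`, and this representation (with
`0 ≤ m ≤ n-2`, `1 ≤ j' ≤ n-1`) is unique. -/
theorem stmt13 (n : ℕ) (a b c : Fin n) (hab : a < b) (hbc : b < c)
    (k ℓ j : ℕ) (hsum : k + ℓ + j = n) (hℓ : 1 ≤ ℓ) (hj : 1 ≤ j) :
    ((fun i => max (strMap n a c (n - j) i) (strMap n a b k i)) = triMap n a b c k ℓ) ∧
    (∀ m j' : ℕ, m ≤ n - 2 → 1 ≤ j' → j' ≤ n - 1 →
      (fun i => max (strMap n a c (n - j') i) (strMap n a b m i)) = triMap n a b c k ℓ →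
      m = k ∧ j' = j) := by
  have hnj : n - j = k + ℓ := by omega
  refine ⟨hnj ▸ max_strMap_eq_triMap hab.le hbc.le, fun m j' _ _ _ h => ?_⟩
  obtain ⟨hp, rfl⟩ := eq_of_max_strMap_eq_triMap hab hbc hℓ (by omega) h
  exact ⟨rfl, by omega⟩
end

section
/- For n > 3 and a < b < c in C_n, the triangle Δ^{(n)}{a,b,c} has no left identity: there exist two distinct elements α ≠ β of the triangle such that α∘γ = β∘γ for all γ in the triangle (left-similar elements), hence no element ε satisfies ε·γ = γ (i.e., γ∘ε = γ) for all γ. -/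
section aux
variable {n : ℕ}

lemma aux_mono_lt (t u v : Fin n) (huv : u ≤ v) :
    Monotone (fun x => if x < t then u else v) := by
  intro x y hxy
  dsimp only
  split_ifs
  · exact le_refl u
  · exact huv
  · exact absurd (lt_of_le_of_lt hxy ‹y < t›) ‹¬ x < t›
  · exact le_refl v

lemma aux_mono_le (t u v : Fin n) (huv : u ≤ v) :
    Monotone (fun x => if x ≤ t then u else v) := by
  intro x y hxy
  dsimp only
  split_ifs
  · exact le_refl u
  · exact huv
  · exact absurd (le_trans hxy ‹y ≤ t›) ‹¬ x ≤ t›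
  · exact le_refl v

lemma aux_key (hn : 3 < n) (a b c : Fin n) (hab : a < b) (hbc : b < c) :
    ∃ α β : Fin n → Fin n,
      (Monotone α ∧ Set.range α ⊆ {a, b, c}) ∧
      (Monotone β ∧ Set.range β ⊆ {a, b, c}) ∧ α ≠ β ∧
      α a = β a ∧ α b = β b ∧ α c = β c := by
  have hab' : a.val < b.val := hab
  have hbc' : b.val < c.val := hbc
  have hcn : c.val < n := c.isLt
  by_cases h1 : 0 < a.val
  · -- use α = const c, β = if x < a then b else c, differ at 0
    refine ⟨fun _ => c, fun x => if x < a then b else c, ⟨monotone_const, ?_⟩,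
      ⟨aux_mono_lt a b c (le_of_lt hbc), ?_⟩, ?_, ?_, ?_, ?_⟩
    · rintro z ⟨x, rfl⟩; simp
    · rintro z ⟨x, rfl⟩; dsimp only; split_ifs <;> simp
    · intro h
      have := congrFun h ⟨0, by omega⟩
      rw [if_pos (by exact h1)] at this
      exact absurd this.symm (ne_of_lt hbc)
    · simp
    · dsimp only; rw [if_neg (not_lt.mpr (le_of_lt hab))]
    · dsimp only; rw [if_neg (not_lt.mpr (le_of_lt (lt_trans hab hbc)))]
  by_cases h2 : a.val + 1 < b.val
  · -- gap between a and b: α = if x ≤ a then a else b, β = if x < b then a else b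
    refine ⟨fun x => if x ≤ a then a else b, fun x => if x < b then a else b,
      ⟨aux_mono_le a a b (le_of_lt hab), ?_⟩,
      ⟨aux_mono_lt b a b (le_of_lt hab), ?_⟩, ?_, ?_, ?_, ?_⟩
    · rintro z ⟨x, rfl⟩; dsimp only; split_ifs <;> simp
    · rintro z ⟨x, rfl⟩; dsimp only; split_ifs <;> simp
    · intro h
      have := congrFun h ⟨a.val + 1, by omega⟩
      rw [if_neg (by simp [Fin.le_def]), if_pos (by simp [Fin.lt_def]; omega)] at this
      exact absurd this (ne_of_gt hab)
    · dsimp only; rw [if_pos le_rfl, if_pos hab]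
    · dsimp only; rw [if_neg (not_le.mpr hab), if_neg (lt_irrefl b)]
    · dsimp only; rw [if_neg (not_le.mpr (lt_trans hab hbc)), if_neg (not_lt.mpr (le_of_lt hbc))]
  by_cases h3 : b.val + 1 < c.val
  · refine ⟨fun x => if x ≤ b then b else c, fun x => if x < c then b else c,
      ⟨aux_mono_le b b c (le_of_lt hbc), ?_⟩,
      ⟨aux_mono_lt c b c (le_of_lt hbc), ?_⟩, ?_, ?_, ?_, ?_⟩
    · rintro z ⟨x, rfl⟩; dsimp only; split_ifs <;> simp
    · rintro z ⟨x, rfl⟩; dsimp only; split_ifs <;> simp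
    · intro h
      have := congrFun h ⟨b.val + 1, by omega⟩
      rw [if_neg (by simp [Fin.le_def]), if_pos (by simp [Fin.lt_def]; omega)] at this
      exact absurd this (ne_of_gt hbc)
    · dsimp only; rw [if_pos (le_of_lt hab), if_pos (lt_trans hab hbc)]
    · dsimp only; rw [if_pos le_rfl, if_pos hbc]
    · dsimp only; rw [if_neg (not_le.mpr hbc), if_neg (lt_irrefl c)]
  · -- c < n - 1 must hold
    have h4 : c.val + 1 < n := by omega
    refine ⟨fun _ => a, fun x => if x ≤ c then a else b,
      ⟨monotone_const, ?_⟩,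
      ⟨aux_mono_le c a b (le_of_lt hab), ?_⟩, ?_, ?_, ?_, ?_⟩
    · rintro z ⟨x, rfl⟩; simp
    · rintro z ⟨x, rfl⟩; dsimp only; split_ifs <;> simp
    · intro h
      have := congrFun h ⟨c.val + 1, by omega⟩
      rw [if_neg (by simp [Fin.le_def])] at this
      exact absurd this (ne_of_lt hab)
    · dsimp only; rw [if_pos (le_of_lt (lt_trans hab hbc))]
    · dsimp only; rw [if_pos (le_of_lt hbc)]
    · dsimp only; rw [if_pos le_rfl]

end aux

/-- For `n > 3`, the triangle `Δ^{(n)}{a,b,c}` contains two distinct left-similar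
elements (α ≠ β with `α ∘ γ = β ∘ γ` for all γ in the triangle), and has no left identity
(no ε in the triangle with `γ ∘ ε = γ` for all γ in the triangle). -/
theorem stmt16 (n : ℕ) (hn : 3 < n) (a b c : Fin n) (hab : a < b) (hbc : b < c) :
    (∃ α β : Fin n → Fin n,
      (Monotone α ∧ Set.range α ⊆ {a, b, c}) ∧
      (Monotone β ∧ Set.range β ⊆ {a, b, c}) ∧ α ≠ β ∧
      ∀ γ : Fin n → Fin n, Monotone γ → Set.range γ ⊆ {a, b, c} → α ∘ γ = β ∘ γ) ∧
    ¬ ∃ ε : Fin n → Fin n, Monotone ε ∧ Set.range ε ⊆ {a, b, c} ∧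
      ∀ γ : Fin n → Fin n, Monotone γ → Set.range γ ⊆ {a, b, c} → γ ∘ ε = γ := by
  obtain ⟨α, β, hα, hβ, hne, ha, hb, hc⟩ := aux_key hn a b c hab hbc
  have hsim : ∀ γ : Fin n → Fin n, Monotone γ → Set.range γ ⊆ {a, b, c} → α ∘ γ = β ∘ γ := by
    intro γ _ hr
    funext x
    have hx : γ x ∈ ({a, b, c} : Set (Fin n)) := hr ⟨x, rfl⟩
    simp only [Set.mem_insert_iff, Set.mem_singleton_iff] at hx
    rcases hx with h | h | h <;> simp [Function.comp, h, ha, hb, hc]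
  refine ⟨⟨α, β, hα, hβ, hne, hsim⟩, ?_⟩
  rintro ⟨ε, hεm, hεr, hεid⟩
  have h1 : α ∘ ε = β ∘ ε := hsim ε hεm hεr
  have h2 : α ∘ ε = α := hεid α hα.1 hα.2
  have h3 : β ∘ ε = β := hεid β hβ.1 hβ.2
  exact hne (h2 ▸ h3 ▸ h1)
end

section
/- An element α of the triangle Δ^{(n)}{a,b,c} lying in its interior (i.e., taking all three values a, b, c) is idempotent (α∘α = α) if and only if a, b, c are all fixed points of α, and in that case α is a right identity of the triangle: β·α = α∘β = β for all β ∈ Δ^{(n)}{a,b,c}. -/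
namespace Function

variable {X Y : Type*} {f : X → X}

theorem comp_self_eq_self_iff_eqOn_range : f ∘ f = f ↔ Set.EqOn f id (Set.range f) := by
  constructor
  · rintro h _ ⟨x, rfl⟩
    exact congrFun h x
  · intro h
    funext x
    exact h (Set.mem_range_self x)

theorem comp_eq_self_of_comp_self_eq_self (hf : f ∘ f = f) {g : Y → X}
    (hg : Set.range g ⊆ Set.range f) : f ∘ g = g :=
  funext fun y => comp_self_eq_self_iff_eqOn_range.mp hf (hg (Set.mem_range_self y))

end Function

theorem stmt17_general (n : ℕ) (a b c : Fin n)
    (α : Fin n → Fin n) (hr : Set.range α = {a, b, c}) :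
    (α ∘ α = α ↔ (α a = a ∧ α b = b ∧ α c = c)) ∧
    (α ∘ α = α →
      ∀ β : Fin n → Fin n, Monotone β → Set.range β ⊆ {a, b, c} → α ∘ β = β) := by
  refine ⟨?_, fun hα β _ hβ => Function.comp_eq_self_of_comp_self_eq_self hα (hr ▸ hβ)⟩
  rw [Function.comp_self_eq_self_iff_eqOn_range, hr]
  simp [Set.EqOn]

/-- An interior element `α` of the triangle `Δ^{(n)}{a,b,c}` (image exactly
`{a,b,c}`) is idempotent iff `a`, `b`, `c` are fixed points of `α`, and in that case `α` is a
right identity: `α ∘ β = β` for all `β` in the triangle. -/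
theorem stmt17 (n : ℕ) (a b c : Fin n) (hab : a < b) (hbc : b < c)
    (α : Fin n → Fin n) (hm : Monotone α) (hr : Set.range α = {a, b, c}) :
    (α ∘ α = α ↔ (α a = a ∧ α b = b ∧ α c = c)) ∧
    (α ∘ α = α →
      ∀ β : Fin n → Fin n, Monotone β → Set.range β ⊆ {a, b, c} → α ∘ β = β) :=
  stmt17_general n a b c α hr
end
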